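/- Let H be a model graph, G a simple undirected graph with a partial labeling in which each label in {A,B,C,D} is assigned to at least one vertex, and v an unlabeled vertex. Let L be the set of all labels possible for v. If |L| ≥ 2, then L is not non-maximal: there is no L' ⊆ {A,B,C,D} with L ⊊ L', N_full(L) = N_full(L'), and N_dotted(L) = N_dotted(L'). -/

import Mathlib

inductive Label : Type
  | A | B | C | D
deriving DecidableEq

instance instFintypeLabel : Fintype Label where
  elems := {Label.A, Label.B, Label.C, Label.D}
  complete := by intro x; cases x <;> simp

/-- A model graph: an undirected graph on the four labels A,B,C,D, each edge
marked full or dotted (never both), symmetric and irreflexive. -/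
structure ModelGraph : Type where
  full : Label → Label → Bool
  dotted : Label → Label → Bool
  full_symm : ∀ p q, full p q = full q p
  dotted_symm : ∀ p q, dotted p q = dotted q p
  full_irrefl : ∀ p, full p p = false
  dotted_irrefl : ∀ p, dotted p p = false
  not_both : ∀ p q, ¬ (full p q = true ∧ dotted p q = true)

/-- `ℓ` is an `H`-partition of `G`: all four classes nonempty, full edges of `H`
force complete adjacency, dotted edges force complete nonadjacency. -/
def IsHPartition {V : Type} (G : SimpleGraph V) (H : ModelGraph) (ℓ : V → Label) : Prop :=
  (∀ p : Label, ∃ v, ℓ v = p) ∧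
  (∀ u v, H.full (ℓ u) (ℓ v) = true → G.Adj u v) ∧
  (∀ u v, H.dotted (ℓ u) (ℓ v) = true → ¬ G.Adj u v)

/-- Label `p` is possible for vertex `v` relative to the partial labeling `pl`. -/
def Possible {V : Type} (G : SimpleGraph V) (H : ModelGraph)
    (pl : V → Option Label) (v : V) (p : Label) : Prop :=
  (∀ q y, H.full p q = true → pl y = some q → G.Adj v y) ∧
  (∀ q y, H.dotted p q = true → pl y = some q → ¬ G.Adj v y)

/-- Full-edge neighborhood of a set of labels. -/
def NFull (H : ModelGraph) (L : Finset Label) : Finset Label :=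
  Finset.univ.filter (fun q => ∃ p ∈ L, H.full p q = true)

/-- Dotted-edge neighborhood of a set of labels. -/
def NDotted (H : ModelGraph) (L : Finset Label) : Finset Label :=
  Finset.univ.filter (fun q => ∃ p ∈ L, H.dotted p q = true)

/-- Class sizes `a,b,c,d` as a function of the label. -/
def cnt (a b c d : ℕ) : Label → ℕ
  | .A => a | .B => b | .C => c | .D => d

namespace ModelGraph

variable (H : ModelGraph)

theorem mem_NFull {L : Finset Label} {q : Label} : q ∈ NFull H L ↔ ∃ p ∈ L, H.full p q = true := by
  simp [NFull]

theorem mem_NDotted {L : Finset Label} {q : Label} :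
    q ∈ NDotted H L ↔ ∃ p ∈ L, H.dotted p q = true := by
  simp [NDotted]

theorem NFull_mono {L L' : Finset Label} (h : L ⊆ L') : NFull H L ⊆ NFull H L' := fun _ hq =>
  let ⟨p, hp, hpq⟩ := (mem_NFull H).1 hq
  (mem_NFull H).2 ⟨p, h hp, hpq⟩

theorem NDotted_mono {L L' : Finset Label} (h : L ⊆ L') : NDotted H L ⊆ NDotted H L' := fun _ hq =>
  let ⟨p, hp, hpq⟩ := (mem_NDotted H).1 hq
  (mem_NDotted H).2 ⟨p, h hp, hpq⟩

end ModelGraph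

theorem possible_of_neighbors_subset {V : Type} {G : SimpleGraph V} {H : ModelGraph}
    {pl : V → Option Label} {v : V} {L : Finset Label} {p : Label}
    (hL : ∀ p ∈ L, Possible G H pl v p)
    (hfull : NFull H {p} ⊆ NFull H L) (hdotted : NDotted H {p} ⊆ NDotted H L) :
    Possible G H pl v p := by
  constructor
  · intro q y hpq hy
    obtain ⟨r, hr, hrq⟩ :=
      H.mem_NFull.1 (hfull (H.mem_NFull.2 ⟨p, Finset.mem_singleton_self p, hpq⟩))
    exact (hL r hr).1 q y hrq hy
  · intro q y hpq hy
    obtain ⟨r, hr, hrq⟩ :=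
      H.mem_NDotted.1 (hdotted (H.mem_NDotted.2 ⟨p, Finset.mem_singleton_self p, hpq⟩))
    exact (hL r hr).2 q y hrq hy

theorem stmt_1_general {V : Type} (G : SimpleGraph V) (H : ModelGraph)
    (pl : V → Option Label)
    (v : V) (L : Finset Label)
    (hL : ∀ p : Label, p ∈ L ↔ Possible G H pl v p) :
    ¬ ∃ L' : Finset Label, L ⊂ L' ∧ NFull H L = NFull H L' ∧ NDotted H L = NDotted H L' := by
  rintro ⟨L', hss, hf, hd⟩
  obtain ⟨p, hpL', hpL⟩ := Finset.exists_of_ssubset hss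
  have hsingle : {p} ⊆ L' := Finset.singleton_subset_iff.2 hpL'
  refine hpL ((hL p).2 (possible_of_neighbors_subset (fun r hr => (hL r).1 hr) ?_ ?_))
  · exact hf ▸ H.NFull_mono hsingle
  · exact hd ▸ H.NDotted_mono hsingle

/-- the set L of all possible labels for an unlabeled vertex v
(with |L| ≥ 2, every label used in the partial labeling) is not non-maximal. -/
theorem stmt_1 {V : Type} (G : SimpleGraph V) (H : ModelGraph)
    (pl : V → Option Label) (hbase : ∀ p : Label, ∃ y, pl y = some p)
    (v : V) (hv : pl v = none) (L : Finset Label)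
    (hL : ∀ p : Label, p ∈ L ↔ Possible G H pl v p)
    (hcard : 2 ≤ L.card) :
    ¬ ∃ L' : Finset Label, L ⊂ L' ∧ NFull H L = NFull H L' ∧ NDotted H L = NDotted H L' :=
  stmt_1_general G H pl v L hL
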